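/- Let f: ℝ → [0,∞) be Lipschitz with constant L on an interval [a,b] with a < b. Then q(ȳ − m̄) = (1/8)(b−a)²(f(b) − f(a)) − ∫_a^b (1/2)(y − m̄)² f'(y) dy, where q = ∫_a^b f, qȳ = ∫_a^b y f(y) dy, and m̄ = (a+b)/2; consequently q|ȳ − m̄| ≤ (L/6)(b−a)³. -/

import Mathlib

open intervalIntegral
open scoped NNReal

/-!
Integrating by parts against `v y = (y - m̄)² / 2`, whose derivative is `y - m̄` and which takes
the same value `(b - a)² / 8` at both endpoints, turns `q (ȳ - m̄) = ∫ (y - m̄) f` into the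
boundary term minus `∫ v f'`; this is legitimate because a Lipschitz function is absolutely
continuous. Both terms are then bounded with `|f'| ≤ L`: the boundary term by `L (b - a)³ / 8`
and the integral by `L ∫ v = L (b - a)³ / 24`.
-/

theorem integral_sq_sub_midpoint (a b : ℝ) :
    ∫ y in a..b, (y - (a + b) / 2) ^ 2 = (b - a) ^ 3 / 12 := by
  rw [integral_comp_sub_right (fun y => y ^ 2), integral_pow]
  ring

theorem AbsolutelyContinuousOnInterval.integral_sub_midpoint_mul {f : ℝ → ℝ} {a b : ℝ}
    (hf : AbsolutelyContinuousOnInterval f a b) :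
    ∫ y in a..b, (y - (a + b) / 2) * f y =
      1 / 8 * (b - a) ^ 2 * (f b - f a) -
        ∫ y in a..b, 1 / 2 * (y - (a + b) / 2) ^ 2 * deriv f y := by
  set v : ℝ → ℝ := fun y => 1 / 2 * (y - (a + b) / 2) ^ 2
  have hv : AbsolutelyContinuousOnInterval v a b :=
    (by fun_prop : ContDiff ℝ 1 v).contDiffOn.absolutelyContinuousOnInterval
  have hv_deriv : deriv v = fun y => y - (a + b) / 2 := by
    ext y
    simp [v]
  have hparts := hv.integral_mul_deriv_eq_deriv_mul hf
  rw [hv_deriv] at hparts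
  simp only [v] at hparts
  linear_combination hparts

theorem LipschitzWith.abs_integral_half_sq_sub_midpoint_mul_deriv_le {f : ℝ → ℝ} {K : ℝ≥0}
    (hf : LipschitzWith K f) {a b : ℝ} (hab : a ≤ b) :
    |∫ y in a..b, 1 / 2 * (y - (a + b) / 2) ^ 2 * deriv f y| ≤ K * (b - a) ^ 3 / 24 := by
  have hpointwise (y : ℝ) :
      ‖1 / 2 * (y - (a + b) / 2) ^ 2 * deriv f y‖ ≤ K / 2 * (y - (a + b) / 2) ^ 2 := by
    have hderiv : |deriv f y| ≤ K := norm_deriv_le_of_lipschitz hf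
    rw [Real.norm_eq_abs, abs_mul, abs_of_nonneg (by positivity)]
    nlinarith [sq_nonneg (y - (a + b) / 2)]
  calc |∫ y in a..b, 1 / 2 * (y - (a + b) / 2) ^ 2 * deriv f y|
      ≤ ∫ y in a..b, K / 2 * (y - (a + b) / 2) ^ 2 :=
        norm_integral_le_of_norm_le hab (.of_forall fun y _ => hpointwise y)
          (Continuous.intervalIntegrable (by fun_prop) a b)
    _ = K * (b - a) ^ 3 / 24 := by
        rw [integral_const_mul, integral_sq_sub_midpoint]
        ring

theorem bin_mean_integration_by_parts_general
    (f : ℝ → ℝ) (L a b q ybar mbar : ℝ)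
    (hL : 0 < L)
    (hLip : ∀ y₁ y₂ : ℝ, |f y₁ - f y₂| ≤ L * |y₁ - y₂|)
    (hab : a < b)
    (hq : q = ∫ y in a..b, f y)
    (hq0 : 0 < q)
    (hybar : q * ybar = ∫ y in a..b, y * f y)
    (hmbar : mbar = (a + b) / 2) :
    q * (ybar - mbar) =
      (1 / 8) * (b - a) ^ 2 * (f b - f a) -
        ∫ y in a..b, (1 / 2) * (y - mbar) ^ 2 * deriv f y ∧
    q * |ybar - mbar| ≤ L / 6 * (b - a) ^ 3 := by
  subst hmbar
  have hlip : LipschitzWith L.toNNReal f :=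
    LipschitzWith.of_dist_le' (by simpa only [Real.dist_eq] using hLip)
  have hfc : Continuous f := hlip.continuous
  have hmean : q * (ybar - (a + b) / 2) = ∫ y in a..b, (y - (a + b) / 2) * f y := by
    rw [mul_sub, hybar, mul_comm q, hq, ← integral_const_mul,
      ← integral_sub (Continuous.intervalIntegrable (by fun_prop) _ _)
        (Continuous.intervalIntegrable (by fun_prop) _ _)]
    simp_rw [sub_mul]
  have hac : AbsolutelyContinuousOnInterval f a b :=
    hlip.lipschitzOnWith.absolutelyContinuousOnInterval
  have hparts := hac.integral_sub_midpoint_mul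
  refine ⟨hmean.trans hparts, ?_⟩
  have hends : |f b - f a| ≤ L * (b - a) := by
    simpa only [abs_of_pos (sub_pos.2 hab)] using hLip b a
  have hrest := hlip.abs_integral_half_sq_sub_midpoint_mul_deriv_le hab.le
  rw [Real.coe_toNNReal L hL.le] at hrest
  calc q * |ybar - (a + b) / 2| = |q * (ybar - (a + b) / 2)| := by
        rw [abs_mul, abs_of_pos hq0]
    _ ≤ 1 / 8 * (b - a) ^ 2 * |f b - f a| +
          |∫ y in a..b, 1 / 2 * (y - (a + b) / 2) ^ 2 * deriv f y| := by
        rw [hmean, hparts]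
        refine (abs_sub _ _).trans_eq ?_
        rw [abs_mul, abs_of_nonneg (by positivity : (0 : ℝ) ≤ 1 / 8 * (b - a) ^ 2)]
    _ ≤ 1 / 8 * (b - a) ^ 2 * (L * (b - a)) + L * (b - a) ^ 3 / 24 := by gcongr
    _ = L / 6 * (b - a) ^ 3 := by ring

/-- For f Lipschitz with constant L on [a,b],
q(ȳ − m̄) = (1/8)(b−a)²(f(b) − f(a)) − ∫_a^b (1/2)(y − m̄)² f'(y) dy,
and consequently q|ȳ − m̄| ≤ (L/6)(b−a)³. -/
theorem bin_mean_integration_by_parts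
    (f : ℝ → ℝ) (L a b q ybar mbar : ℝ)
    (hf0 : ∀ y : ℝ, 0 ≤ f y)
    (hL : 0 < L)
    (hLip : ∀ y₁ y₂ : ℝ, |f y₁ - f y₂| ≤ L * |y₁ - y₂|)
    (hab : a < b)
    (hq : q = ∫ y in a..b, f y)
    (hq0 : 0 < q)
    (hybar : q * ybar = ∫ y in a..b, y * f y)
    (hmbar : mbar = (a + b) / 2) :
    q * (ybar - mbar) =
      (1 / 8) * (b - a) ^ 2 * (f b - f a) -
        ∫ y in a..b, (1 / 2) * (y - mbar) ^ 2 * deriv f y ∧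
    q * |ybar - mbar| ≤ L / 6 * (b - a) ^ 3 :=
  bin_mean_integration_by_parts_general f L a b q ybar mbar hL hLip hab hq hq0 hybar hmbar
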